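/- Let S = {σ₋^{(i)} ⊗ P_s, σ₊^{(i)} ⊗ P_s : 1 ≤ i ≤ N, s a computational basis configuration of the neighbors of i} be the set of Lindblad generators of the Ising collision master equation, where σ±^{(i)} acts on site i and P_s = |s⟩⟨s| projects the neighboring sites onto configuration s. Then the commutant of S within the algebra of operators on (ℂ²)^{⊗N} consists only of scalar multiples of the identity. -/
import Mathlib

noncomputable section

/-- Lindblad generator `σ₋⁽ⁱ⁾ ⊗ P_s`: lowers spin `i` (from `|↑⟩ = 0` to `|↓⟩ = 1`) while
projecting the neighboring sites of `i` onto the configuration given by `s`. -/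
def LowerG (N : ℕ) (i : Fin N) (s : Fin N → Fin 2) :
    Matrix (Fin N → Fin 2) (Fin N → Fin 2) ℂ :=
  Matrix.of fun c c' =>
    if c' i = 0 ∧ c = Function.update c' i 1 ∧
        (∀ j : Fin N, ((j : ℕ) + 1 = (i : ℕ) ∨ (i : ℕ) + 1 = (j : ℕ)) → c' j = s j)
      then 1 else 0

/-- Lindblad generator `σ₊⁽ⁱ⁾ ⊗ P_s`, the adjoint of `σ₋⁽ⁱ⁾ ⊗ P_s`. -/
def RaiseG (N : ℕ) (i : Fin N) (s : Fin N → Fin 2) :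
    Matrix (Fin N → Fin 2) (Fin N → Fin 2) ℂ :=
  (LowerG N i s).conjTranspose

lemma update_eq_update_iff {N : ℕ} {a b : Fin N → Fin 2} {i : Fin N}
    (ha : a i = 0) (hb : b i = 0) :
    Function.update a i 1 = Function.update b i 1 ↔ a = b := by
  constructor
  · intro h; funext j
    by_cases hj : j = i
    · subst hj; rw [ha, hb]
    · have := congrFun h j
      simpa [Function.update_of_ne hj] using this
  · rintro rfl; rfl

lemma raise_mul_lower (N : ℕ) (i : Fin N) (s : Fin N → Fin 2) :
    RaiseG N i s * LowerG N i s =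
      Matrix.diagonal (fun a =>
        if a i = 0 ∧ (∀ j : Fin N, ((j : ℕ) + 1 = (i : ℕ) ∨ (i : ℕ) + 1 = (j : ℕ)) → a j = s j)
        then (1 : ℂ) else 0) := by
  ext a b
  rw [Matrix.mul_apply]
  simp only [RaiseG, LowerG, Matrix.conjTranspose_apply, Matrix.of_apply]
  by_cases hab : a = b
  · subst hab
    rw [Matrix.diagonal_apply_eq]
    by_cases ha : a i = 0 ∧ (∀ j : Fin N, ((j : ℕ) + 1 = (i : ℕ) ∨ (i : ℕ) + 1 = (j : ℕ)) → a j = s j)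
    · rw [if_pos ha]
      rw [Finset.sum_eq_single (Function.update a i 1)]
      · rw [if_pos ⟨ha.1, rfl, ha.2⟩]; simp
      · intro k _ hk
        rw [if_neg (fun h => hk h.2.1)]; simp
      · intro h; exact absurd (Finset.mem_univ _) h
    · rw [if_neg ha]
      apply Finset.sum_eq_zero
      intro k _
      rw [if_neg (fun h => ha ⟨h.1, h.2.2⟩)]; simp
  · rw [Matrix.diagonal_apply_ne _ hab]
    apply Finset.sum_eq_zero
    intro k _
    by_cases h1 : a i = 0 ∧ k = Function.update a i 1 ∧
        (∀ j : Fin N, ((j : ℕ) + 1 = (i : ℕ) ∨ (i : ℕ) + 1 = (j : ℕ)) → a j = s j)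
    · by_cases h2 : b i = 0 ∧ k = Function.update b i 1 ∧
          (∀ j : Fin N, ((j : ℕ) + 1 = (i : ℕ) ∨ (i : ℕ) + 1 = (j : ℕ)) → b j = s j)
      · exfalso
        apply hab
        rw [← update_eq_update_iff h1.1 h2.1, ← h1.2.1, ← h2.2.1]
      · rw [if_neg h2, mul_zero]
    · rw [if_neg h1]; simp

lemma all_eq {N : ℕ} (d : (Fin N → Fin 2) → ℂ)
    (h : ∀ (c : Fin N → Fin 2) (i : Fin N), c i = 0 → d (Function.update c i 1) = d c) :
    ∀ c, d c = d (fun _ => 1) := by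
  have key : ∀ n (c : Fin N → Fin 2),
      (Finset.univ.filter fun j => c j = 0).card = n → d c = d (fun _ => 1) := by
    intro n
    induction n with
    | zero =>
      intro c hc
      have hcz : ∀ j, c j ≠ 0 := by
        intro j h0
        have hm : j ∈ Finset.univ.filter fun j => c j = 0 := by simp [h0]
        rw [Finset.card_eq_zero] at hc
        simp [hc] at hm
      have : c = fun _ => 1 := by
        funext j
        have := hcz j
        omega
      rw [this]
    | succ n ih =>
      intro c hc
      obtain ⟨i, hi⟩ : ∃ i, c i = 0 := by
        by_contra hcon
        push_neg at hcon
        have : (Finset.univ.filter fun j => c j = 0) = ∅ := by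
          ext j; simp [hcon j]
        rw [this] at hc
        simp at hc
      have hset : (Finset.univ.filter fun j => Function.update c i 1 j = 0)
          = (Finset.univ.filter fun j => c j = 0).erase i := by
        ext j
        simp only [Finset.mem_filter, Finset.mem_erase, Finset.mem_univ, true_and,
          Function.update_apply]
        constructor
        · intro hj
          by_cases hji : j = i
          · simp [hji] at hj
          · simp [hji] at hj; exact ⟨hji, hj⟩
        · intro hj
          simp [hj.1, hj.2]
      have hcard : (Finset.univ.filter fun j => Function.update c i 1 j = 0).card = n := by
        rw [hset, Finset.card_erase_of_mem (by simp [hi]), hc]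
        rfl
      rw [← h c i hi]
      exact ih _ hcard
  intro c
  exact key _ c rfl

theorem ising_generators_commutant_trivial (N : ℕ) (hN : 2 ≤ N)
    (A : Matrix (Fin N → Fin 2) (Fin N → Fin 2) ℂ)
    (hcomm : ∀ (i : Fin N) (s : Fin N → Fin 2),
      A * LowerG N i s = LowerG N i s * A ∧ A * RaiseG N i s = RaiseG N i s * A) :
    ∃ c : ℂ, A = c • (1 : Matrix (Fin N → Fin 2) (Fin N → Fin 2) ℂ) := by
  classical
  set P : Fin N → (Fin N → Fin 2) → Matrix (Fin N → Fin 2) (Fin N → Fin 2) ℂ :=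
    fun i s => Matrix.diagonal (fun a =>
      if a i = 0 ∧ (∀ j : Fin N, ((j : ℕ) + 1 = (i : ℕ) ∨ (i : ℕ) + 1 = (j : ℕ)) → a j = s j)
      then (1 : ℂ) else 0) with hPdef
  have hP : ∀ (i : Fin N) (s : Fin N → Fin 2), A * P i s = P i s * A := by
    intro i s
    have h1 := (hcomm i s).1
    have h2 := (hcomm i s).2
    rw [hPdef]
    simp only
    rw [← raise_mul_lower]
    calc A * (RaiseG N i s * LowerG N i s)
        = (A * RaiseG N i s) * LowerG N i s := by rw [mul_assoc]
      _ = (RaiseG N i s * A) * LowerG N i s := by rw [h2]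
      _ = RaiseG N i s * (A * LowerG N i s) := by rw [mul_assoc]
      _ = RaiseG N i s * (LowerG N i s * A) := by rw [h1]
      _ = (RaiseG N i s * LowerG N i s) * A := by rw [← mul_assoc]
  have hoff : ∀ a b, a ≠ b → A a b = 0 := by
    intro a b hab
    obtain ⟨j, hj⟩ := Function.ne_iff.mp hab
    by_cases haj : a j = 0
    · have he : (A * P j a) a b = (P j a * A) a b := by rw [hP j a]
      rw [hPdef] at he
      simp only [Matrix.mul_diagonal, Matrix.diagonal_mul] at he
      have hbj : ¬ (b j = 0) := fun h0 => hj (haj.trans h0.symm)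
      simp [haj, hbj] at he
      exact he.symm
    · have hbj : b j = 0 := by
        have h1 := a j |>.isLt
        have h2 := b j |>.isLt
        omega
      have he : (A * P j b) a b = (P j b * A) a b := by rw [hP j b]
      rw [hPdef] at he
      simp only [Matrix.mul_diagonal, Matrix.diagonal_mul] at he
      simp [haj, hbj] at he
      exact he
  have hAD : A = Matrix.diagonal (fun a => A a a) := by
    ext a b
    by_cases h : a = b
    · subst h; simp
    · simp [Matrix.diagonal_apply_ne _ h, hoff a b h]
  have hdiag : ∀ (c : Fin N → Fin 2) (i : Fin N), c i = 0 →
      A (Function.update c i 1) (Function.update c i 1) = A c c := by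
    intro c i hci
    have h1 := (hcomm i c).1
    rw [hAD] at h1
    have he : (Matrix.diagonal (fun a => A a a) * LowerG N i c) (Function.update c i 1) c
        = (LowerG N i c * Matrix.diagonal (fun a => A a a)) (Function.update c i 1) c := by
      rw [h1]
    rw [Matrix.diagonal_mul, Matrix.mul_diagonal] at he
    have hL : LowerG N i c (Function.update c i 1) c = 1 := by
      simp [LowerG, hci]
    rw [hL] at he
    simpa using he
  obtain ⟨cst, hcst⟩ : ∃ cst : ℂ, ∀ a, A a a = cst :=
    ⟨A (fun _ => 1) (fun _ => 1), fun a => all_eq (fun c => A c c) hdiag a⟩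
  refine ⟨cst, ?_⟩
  ext a b
  by_cases h : a = b
  · subst h; simp [Matrix.one_apply, hcst a]
  · simp [Matrix.one_apply_ne h, hoff a b h]

end
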